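/- There is a universal constant C > 0 such that for every connected Abelian Cayley graph G = Cay(Γ, S) with |Γ| = n and generating multiset S of size d, the multiplicity of λ_2 as an eigenvalue of the normalized Laplacian of G is at most 2^{C·d}. -/

import Mathlib

open Matrix

/-- Normalized adjacency matrix of the Abelian Cayley graph `Cay(Γ, S)`. -/
noncomputable def cayleyAdj {Γ : Type*} [AddCommGroup Γ] [Fintype Γ] [DecidableEq Γ]
    (S : Multiset Γ) : Matrix Γ Γ ℝ :=
  Matrix.of fun x y => (S.count (y - x) : ℝ) / (Multiset.card S : ℝ)

/-- Normalized Laplacian `L = I - A` of the Abelian Cayley graph `Cay(Γ, S)`. -/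
noncomputable def cayleyLap {Γ : Type*} [AddCommGroup Γ] [Fintype Γ] [DecidableEq Γ]
    (S : Multiset Γ) : Matrix Γ Γ ℝ :=
  1 - cayleyAdj S

/-- Sorted (nondecreasing) list of eigenvalues of a matrix, with multiplicity. -/
noncomputable def eigList {Γ : Type*} [Fintype Γ] [DecidableEq Γ] (M : Matrix Γ Γ ℝ) : List ℝ :=
  Multiset.sort M.charpoly.roots (· ≤ ·)

/-- The `i`-th smallest eigenvalue (0-indexed, with multiplicity); `eig M 1 = λ₂`. -/
noncomputable def eig {Γ : Type*} [Fintype Γ] [DecidableEq Γ] (M : Matrix Γ Γ ℝ) (i : ℕ) : ℝ :=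
  (eigList M).getD i 0

/-- The multiplicity of `μ` as an eigenvalue of `M` (as a root of the characteristic
polynomial, with multiplicity). -/
noncomputable def eigMult {Γ : Type*} [Fintype Γ] [DecidableEq Γ]
    (M : Matrix Γ Γ ℝ) (μ : ℝ) : ℕ :=
  Multiset.count μ M.charpoly.roots

/-!
The characters `χ` of `Γ` form an eigenbasis of `L`, with eigenvalue
`λ(χ) = 1 - (1/d) Σ_{s ∈ S} Re χ(s)` (real because `S` is symmetric). Sending `χ` to the vector
`(χ(s))_{s ∈ S} ∈ ℂ^S ≅ ℝ^{2d}` gives `‖u(χ) - u(ψ)‖² = 2d · λ(χ ψ⁻¹)`. So the characters with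
`λ(χ) = λ₂` lie at distance `√(2d λ₂)` from `u(1)`, and are pairwise at least that far apart,
because `χ ψ⁻¹ ≠ 1` forces `λ(χ ψ⁻¹) ≥ λ₂`. A volume packing argument bounds their number by
`5^{2d} ≤ 2^{5d}`.
-/

open Finset Polynomial

theorem Multiset.sort_getD_one_le_max {α : Type*} [LinearOrder α] {R : Multiset α} {a b : α}
    (h : {a, b} ≤ R) (x : α) : (R.sort (· ≤ ·)).getD 1 x ≤ max a b := by
  have hcount : 2 ≤ (R.sort (· ≤ ·)).countP (· ≤ max a b) := by
    rw [← Multiset.coe_countP, Multiset.sort_eq]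
    calc 2 = Multiset.countP (· ≤ max a b) {a, b} := by
          rw [Multiset.countP_eq_card.2 (by simp)]; rfl
      _ ≤ _ := Multiset.countP_le_of_le _ h
  have hsorted := R.pairwise_sort (· ≤ ·)
  generalize R.sort (· ≤ ·) = l at hcount hsorted
  match l, hsorted, hcount with
  | [], _, hcount => simp at hcount
  | [_], _, hcount => exact absurd ((List.countP_le_length).trans_lt one_lt_two) (not_lt.2 hcount)
  | y :: z :: t, hsorted, hcount =>
    by_contra! hz
    have : (z :: t).countP (· ≤ max a b) = 0 := by
      refine List.countP_eq_zero.2 fun w hw => ?_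
      have : z ≤ w := by
        rcases List.mem_cons.1 hw with rfl | hw
        · exact le_rfl
        · exact List.rel_of_pairwise_cons (List.pairwise_cons.1 hsorted).2 hw
      simpa using hz.trans_le this
    rw [List.countP_cons, this] at hcount
    split at hcount <;> omega

theorem Matrix.charpoly_roots_eq_of_eigenbasis {K L n ι : Type*} [Field K] [Field L] [Algebra K L]
    [Fintype n] [DecidableEq n] [Fintype ι] [DecidableEq ι] (M : Matrix n n K)
    (b : Module.Basis ι L (n → L)) (f : ι → K)
    (hb : ∀ i, (M.map (algebraMap K L)) *ᵥ b i = algebraMap K L (f i) • b i) :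
    M.charpoly.roots = univ.val.map f := by
  have hdiag : LinearMap.toMatrix b b (M.map (algebraMap K L)).toLin' =
      diagonal (algebraMap K L ∘ f) := by
    ext i j
    rw [LinearMap.toMatrix_apply, toLin'_apply, hb, map_smul, b.repr_self]
    rcases eq_or_ne i j with rfl | h
    · simp [Algebra.smul_def]
    · simp [h]
  have hcharpoly : M.charpoly.map (algebraMap K L) =
      ((univ.val.map f).map fun a => X - C a).prod.map (algebraMap K L) := by
    rw [← charpoly_map, ← charpoly_toLin', ← LinearMap.charpoly_toMatrix _ b, hdiag,
      charpoly_diagonal, Polynomial.map_multiset_prod, Multiset.map_map, Multiset.map_map,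
      prod_eq_multiset_prod]
    simp
  rw [Polynomial.map_injective _ (algebraMap K L).injective hcharpoly, roots_multiset_prod_X_sub_C]

theorem card_le_five_pow_finrank_of_separated {E ι : Type*} [NormedAddCommGroup E]
    [NormedSpace ℝ E] [FiniteDimensional ℝ E] (f : ι → E) (s : Finset ι) (c : E) {r : ℝ}
    (hr : 0 < r) (hball : ∀ i ∈ s, dist (f i) c ≤ r)
    (hsep : ∀ i ∈ s, ∀ j ∈ s, i ≠ j → r ≤ dist (f i) (f j)) :
    #s ≤ 5 ^ Module.finrank ℝ E := by
  classical
  set g : ι → E := fun i => (2 / r) • (f i - c)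
  have hdist : ∀ i j, ‖g i - g j‖ = 2 / r * dist (f i) (f j) := fun i j => by
    rw [← smul_sub, sub_sub_sub_cancel_right, norm_smul, Real.norm_of_nonneg (by positivity),
      dist_eq_norm]
  have hsep' : ∀ i ∈ s, ∀ j ∈ s, i ≠ j → 2 ≤ ‖g i - g j‖ := fun i hi j hj hij => by
    rw [hdist, div_mul_eq_mul_div, le_div_iff₀ hr]
    linarith [hsep i hi j hj hij]
  have hinj : Set.InjOn g s := fun i hi j hj hgij => by
    by_contra hij
    have := hsep' i hi j hj hij
    rw [hgij, sub_self, norm_zero] at this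
    norm_num at this
  rw [← card_image_of_injOn hinj]
  refine Besicovitch.card_le_of_separated _ ?_ ?_
  · simp only [mem_image, forall_exists_index, and_imp, forall_apply_eq_imp_iff₂]
    intro i hi
    rw [norm_smul, Real.norm_of_nonneg (by positivity), ← dist_eq_norm, div_mul_eq_mul_div,
      div_le_iff₀ hr]
    linarith [hball i hi]
  · simp only [mem_image, forall_exists_index, and_imp, forall_apply_eq_imp_iff₂]
    intro i hi j hj hgij
    exact one_le_two.trans (hsep' i hi j hj fun h => hgij (h ▸ rfl))

section Eigenvalue

variable {Γ : Type*} [AddCommGroup Γ] (S : Multiset Γ)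

noncomputable def cayleyLapEigenvalue (χ : AddChar Γ ℂ) : ℝ :=
  1 - (S.map χ).sum.re / Multiset.card S

theorem cayleyLapEigenvalue_one (hS : S ≠ 0) : cayleyLapEigenvalue S 1 = 0 := by
  have : (Multiset.card S : ℝ) ≠ 0 := by simpa using hS
  simp [cayleyLapEigenvalue, this]

end Eigenvalue

section Cayley

variable {Γ : Type*} [AddCommGroup Γ] [Fintype Γ] [DecidableEq Γ] (S : Multiset Γ)

theorem sum_count_mul_addChar (χ : AddChar Γ ℂ) :
    ∑ z, (S.count z : ℂ) * χ z = (S.map χ).sum := by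
  rw [Finset.sum_multiset_map_count, ← Finset.sum_subset (subset_univ S.toFinset)]
  · simp only [nsmul_eq_mul]
  · intro z _ hz
    simp [Multiset.count_eq_zero.2 (mt Multiset.mem_toFinset.2 hz)]

theorem cayleyAdj_map_mulVec_addChar (χ : AddChar Γ ℂ) :
    (cayleyAdj S).map (algebraMap ℝ ℂ) *ᵥ χ = ((S.map χ).sum / Multiset.card S) • ⇑χ := by
  ext x
  have hshift : ∀ z, (S.count z : ℂ) / Multiset.card S * χ (x + z) =
      χ x * ((S.count z : ℂ) * χ z) / Multiset.card S := fun z => by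
    rw [AddChar.map_add_eq_mul]; ring
  simp only [mulVec, dotProduct, map_apply, cayleyAdj, of_apply, Complex.coe_algebraMap,
    Complex.ofReal_div, Complex.ofReal_natCast, Pi.smul_apply, smul_eq_mul]
  rw [← Equiv.sum_comp (Equiv.addLeft x)]
  simp only [Equiv.coe_addLeft, add_sub_cancel_left, hshift, ← Finset.sum_div, ← Finset.mul_sum,
    sum_count_mul_addChar]
  ring

theorem sum_map_addChar_eq_re (hsym : ∀ x : Γ, S.count (-x) = S.count x) (χ : AddChar Γ ℂ) :
    (S.map χ).sum = (S.map χ).sum.re := by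
  have hneg : S.map Neg.neg = S := by
    ext x
    simpa [hsym] using Multiset.count_map_eq_count' Neg.neg S neg_injective (-x)
  rw [eq_comm, ← Complex.conj_eq_iff_re, map_multiset_sum, Multiset.map_map]
  conv_rhs => rw [← hneg, Multiset.map_map]
  congr 1
  exact Multiset.map_congr rfl fun s _ => (χ.map_neg_eq_conj s).symm

theorem cayleyLap_map_mulVec_addChar (hsym : ∀ x : Γ, S.count (-x) = S.count x)
    (χ : AddChar Γ ℂ) :
    (cayleyLap S).map (algebraMap ℝ ℂ) *ᵥ χ = (cayleyLapEigenvalue S χ : ℂ) • ⇑χ := by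
  rw [cayleyLap, Matrix.map_sub _ (map_sub _), Matrix.map_one _ (map_zero _) (map_one _),
    sub_mulVec, one_mulVec, cayleyAdj_map_mulVec_addChar, sum_map_addChar_eq_re S hsym,
    cayleyLapEigenvalue]
  push_cast
  rw [sub_smul, one_smul]

theorem charpoly_cayleyLap_roots (hsym : ∀ x : Γ, S.count (-x) = S.count x) :
    (cayleyLap S).charpoly.roots = univ.val.map (cayleyLapEigenvalue S) :=
  charpoly_roots_eq_of_eigenbasis _ (AddChar.complexBasis Γ) _ fun χ => by
    rw [AddChar.complexBasis_apply]
    exact cayleyLap_map_mulVec_addChar S hsym χ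

theorem eigMult_cayleyLap (hsym : ∀ x : Γ, S.count (-x) = S.count x) (μ : ℝ) :
    eigMult (cayleyLap S) μ = #{χ | cayleyLapEigenvalue S χ = μ} := by
  rw [eigMult, charpoly_cayleyLap_roots S hsym, Multiset.count_map, card_def, filter_val]
  simp only [eq_comm]

theorem eig_cayleyLap_one_le (hS : S ≠ 0) (hsym : ∀ x : Γ, S.count (-x) = S.count x)
    (hpos : 0 < eig (cayleyLap S) 1) {χ : AddChar Γ ℂ} (hχ : χ ≠ 1) :
    eig (cayleyLap S) 1 ≤ cayleyLapEigenvalue S χ := by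
  have hpair :
      {cayleyLapEigenvalue S 1, cayleyLapEigenvalue S χ} ≤ (cayleyLap S).charpoly.roots := by
    rw [charpoly_cayleyLap_roots S hsym]
    simpa [hχ.symm] using Multiset.map_le_map (f := cayleyLapEigenvalue S)
      (Finset.val_le_iff.2 (subset_univ {1, χ}))
  have := Multiset.sort_getD_one_le_max hpair 0
  rw [cayleyLapEigenvalue_one S hS] at this
  exact (le_max_iff.1 this).resolve_left hpos.not_ge

noncomputable def addCharEmbedding (χ : AddChar Γ ℂ) : EuclideanSpace ℂ S :=
  WithLp.toLp 2 fun s => χ s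

theorem dist_addCharEmbedding_sq (hS : S ≠ 0) (χ ψ : AddChar Γ ℂ) :
    dist (addCharEmbedding S χ) (addCharEmbedding S ψ) ^ 2 =
      2 * Multiset.card S * cayleyLapEigenvalue S (χ * ψ⁻¹) := by
  have hd : (Multiset.card S : ℝ) ≠ 0 := by simpa using hS
  have hterm : ∀ s : Γ, dist (χ s) (ψ s) ^ 2 = 2 * (1 - ((χ * ψ⁻¹) s).re) := fun s => by
    rw [Complex.dist_eq, ← Complex.normSq_eq_norm_sq, Complex.normSq_sub,
      Complex.normSq_eq_norm_sq, Complex.normSq_eq_norm_sq, χ.norm_apply, ψ.norm_apply,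
      AddChar.mul_apply, AddChar.inv_apply, AddChar.map_neg_eq_conj]
    ring
  have hsum : (S.map ⇑(χ * ψ⁻¹)).sum = ∑ s : S, (χ * ψ⁻¹) s := by
    rw [← Multiset.map_univ]; rfl
  rw [EuclideanSpace.dist_eq, Real.sq_sqrt (by positivity), cayleyLapEigenvalue, hsum,
    Complex.re_sum]
  simp only [addCharEmbedding, hterm, ← mul_sum, sum_sub_distrib]
  field_simp
  simp

theorem card_cayleyLapEigenvalue_eq_eig_one_le (hS : S ≠ 0)
    (hsym : ∀ x : Γ, S.count (-x) = S.count x) (hpos : 0 < eig (cayleyLap S) 1) :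
    #{χ | cayleyLapEigenvalue S χ = eig (cayleyLap S) 1} ≤ 5 ^ (2 * Multiset.card S) := by
  have hd : (0 : ℝ) < Multiset.card S := by simpa [pos_iff_ne_zero] using hS
  have hdist : ∀ χ ψ, dist (addCharEmbedding S χ) (addCharEmbedding S ψ) =
      √(2 * Multiset.card S * cayleyLapEigenvalue S (χ * ψ⁻¹)) := fun χ ψ => by
    rw [← dist_addCharEmbedding_sq S hS, Real.sqrt_sq dist_nonneg]
  refine (card_le_five_pow_finrank_of_separated (addCharEmbedding S) _ (addCharEmbedding S 1)
    (r := √(2 * Multiset.card S * eig (cayleyLap S) 1)) (by positivity) ?_ ?_).trans_eq ?_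
  · intro χ hχ
    rw [hdist, inv_one, mul_one, (mem_filter.1 hχ).2]
  · intro χ _ ψ _ hχψ
    rw [hdist]
    gcongr
    exact eig_cayleyLap_one_le S hS hsym hpos (mul_inv_eq_one.not.2 hχψ)
  · rw [finrank_real_of_complex, finrank_euclideanSpace, Multiset.card_coe]

end Cayley

/-- There is a universal constant `C > 0` such that for every connected
Abelian Cayley graph `Cay(Γ, S)` with symmetric generating multiset `S` of size `d`,
the multiplicity of `λ₂` as an eigenvalue of the normalized Laplacian is at most `2^(C·d)`. -/
theorem lambda2_multiplicity_le_exp_degree :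
    ∃ C : ℝ, 0 < C ∧
      ∀ (Γ : Type) (_ : AddCommGroup Γ) (_ : Fintype Γ) (_ : DecidableEq Γ)
        (S : Multiset Γ),
        S ≠ 0 →
        (∀ x : Γ, S.count (-x) = S.count x) →
        0 < eig (cayleyLap S) 1 →
        (eigMult (cayleyLap S) (eig (cayleyLap S) 1) : ℝ)
          ≤ (2 : ℝ) ^ (C * (Multiset.card S : ℝ)) := by
  refine ⟨5, by norm_num, fun Γ _ _ _ S hS hsym hpos => ?_⟩
  rw [eigMult_cayleyLap S hsym, Real.rpow_mul_natCast zero_le_two, Real.rpow_ofNat]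
  calc (#{χ | cayleyLapEigenvalue S χ = eig (cayleyLap S) 1} : ℝ)
      ≤ (5 : ℝ) ^ (2 * Multiset.card S) := by
        exact_mod_cast card_cayleyLapEigenvalue_eq_eig_one_le S hS hsym hpos
    _ = 25 ^ Multiset.card S := by rw [pow_mul]; norm_num
    _ ≤ (2 ^ 5) ^ Multiset.card S := by gcongr; norm_num
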